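/- In the setting of the paper with conditions 1⁰–11⁰, fix x ∈ L̄₀ ∩ L₀′ with components x_k = [x]_k, and indices i, j. Say u ≤ e_j satisfies condition (△) if for every f ∈ G, [f(e_i)]_j ≤ u implies [f(x_i)]_j ≤ x_j. Then: if u₁ and u₂ both satisfy (△), so does u₁ + u₂; consequently there exists a maximal element τ_{ij}(x) ≤ e_j satisfying (△). -/

import Mathlib

open Finset

/-- The group of lattice automorphisms of `L` (order automorphisms), with composition as
multiplication. -/
instance latticeAutGroup {L : Type*} [Lattice L] : Group (L ≃o L) where
  mul f g := g.trans f
  one := OrderIso.refl L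
  inv := OrderIso.symm
  mul_assoc f g h := rfl
  one_mul f := rfl
  mul_one f := rfl
  inv_mul_cancel f := by ext x; exact f.symm_apply_apply x

variable {L : Type*} [CompleteLattice L] {n : ℕ}

/-- `ê i`: the join of all the atoms `e j`, `j ≠ i`. -/
def hatE (e : Fin n → L) (i : Fin n) : L := ((univ : Finset (Fin n)).erase i).sup e

/-- The `i`-th component of the support: `[x]ᵢ = (x ⊔ êᵢ) ⊓ eᵢ`. -/
def sc (e : Fin n → L) (x : L) (i : Fin n) : L := (x ⊔ hatE e i) ⊓ e i

/-- The set `L̄₀` of all elements of the form `x₁ ⊔ ⋯ ⊔ xₙ` with `xᵢ ≤ eᵢ`. -/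
def L0bar (e : Fin n → L) : Set L :=
  {x | ∃ y : Fin n → L, (∀ i, y i ≤ e i) ∧ x = (univ : Finset (Fin n)).sup y}

/-- `H = G(L₀)`: the elements of `G` fixing the sublattice `L₀` generated by the atoms
`e₁, …, eₙ` (together with `⊥`, `⊤`) pointwise; equivalently, fixing every `e i`. -/
def Hset (e : Fin n → L) (G : Subgroup (L ≃o L)) : Set (L ≃o L) :=
  {g | g ∈ G ∧ ∀ i, g (e i) = e i}

/-- `L₀′ = L(H)`: the sublattice of elements fixed by every element of `H`. -/
def L0' (e : Fin n → L) (G : Subgroup (L ≃o L)) : Set L :=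
  {x | ∀ h ∈ Hset e G, h x = x}

/-- `Hᵢ`: the automorphisms in `H` which fix every `x ∈ L` with `[x]ᵢ = ⊥`. -/
def HiSet (e : Fin n → L) (G : Subgroup (L ≃o L)) (i : Fin n) : Set (L ≃o L) :=
  {h | h ∈ Hset e G ∧ ∀ x : L, sc e x i = ⊥ → h x = x}

/-- The set `H_{ij}(x)` of transvections: elements `f ∈ G` such that
(1) `f y = y` for every `s ≠ i` and `y ≤ e s`;
(2) `[f y]ᵢ = y` for every `y ≤ eᵢ`;
(3) `[f eᵢ]ₖ = ⊥` for `k ∉ {i,j}`, `[f eᵢ]ᵢ = eᵢ` and `[f eᵢ]ⱼ = x`. -/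
def Hij (e : Fin n → L) (G : Subgroup (L ≃o L)) (i j : Fin n) (x : L) : Set (L ≃o L) :=
  {f | f ∈ G ∧
       (∀ s, s ≠ i → ∀ y, y ≤ e s → f y = y) ∧
       (∀ y, y ≤ e i → sc e (f y) i = y) ∧
       (∀ k, k ≠ i → k ≠ j → sc e (f (e i)) k = ⊥) ∧
       sc e (f (e i)) i = e i ∧ sc e (f (e i)) j = x}

/-- `G(S)`: the pointwise stabilizer in `G` of a set `S ⊆ L`. -/
def GFix (G : Subgroup (L ≃o L)) (S : Set L) : Set (L ≃o L) :=
  {g | g ∈ G ∧ ∀ x ∈ S, g x = x}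

/-- The sublattice of `L` generated by a set `S` (the smallest subset containing `S` closed
under `⊔` and `⊓`). -/
def latClosure (S : Set L) : Set L :=
  ⋂₀ {T : Set L | S ⊆ T ∧ ∀ a ∈ T, ∀ b ∈ T, a ⊔ b ∈ T ∧ a ⊓ b ∈ T}

/-- The ideal of transvections `σ_{ij}(F)`: for `i ≠ j`, the join of all `x ≤ eⱼ` with
`H_{ij}(x) ∩ F ≠ ∅`; and `σ_{ii} = eᵢ`. -/
def sigmaF (e : Fin n → L) (G : Subgroup (L ≃o L)) (F : Subgroup (L ≃o L))
    (i j : Fin n) : L :=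
  if i = j then e i
  else sSup {x | x ≤ e j ∧ (Hij e G i j x ∩ (F : Set (L ≃o L))).Nonempty}

/-- A net collection in `L₀′`: a family `(τ_{ij})` with `τ_{ij} ≤ eⱼ`, `τ_{ii} = eᵢ`,
`τ_{ij} ∈ L₀′`, and such that for every `g ∈ G`:
`[g eᵢ]ⱼ ≤ τ_{ij}` for all `i, j` iff `[g τ_{ki}]ⱼ ≤ τ_{kj}` for all `i, j, k`. -/
def IsNetCollection (e : Fin n → L) (G : Subgroup (L ≃o L)) (τ : Fin n → Fin n → L) : Prop :=
  (∀ i j, τ i j ≤ e j) ∧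
  (∀ i, τ i i = e i) ∧
  (∀ i j, τ i j ∈ L0' e G) ∧
  (∀ g ∈ G, (∀ i j, sc e (g (e i)) j ≤ τ i j) ↔
      (∀ i j k, sc e (g (τ k i)) j ≤ τ k j))

/-- The sublattice `K_τ` of `L₀′` generated by `⊥` and the elements `⨆ⱼ τ_{ij}`. -/
def Kτ (τ : Fin n → Fin n → L) : Set L :=
  latClosure ({⊥} ∪ Set.range fun i => (univ : Finset (Fin n)).sup (τ i))

/-- **The conditions 1⁰–11⁰ of the paper** for the data: a modular lattice `L` of finite
length, the atoms `e₁, …, eₙ` of a Boolean sublattice `L₀` with the same `⊥` and `⊤` as `L`,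
a subgroup `G ≤ Aut L`, and the common value `m` of the dimension on the atoms. -/
structure PaperConditions (e : Fin n → L) (G : Subgroup (L ≃o L)) (m : ℕ) : Prop where
  /-- `L₀` is a Boolean algebra with atoms `e₁, …, eₙ`: the atoms are nonzero, -/
  atom_ne_bot : ∀ i, e i ≠ ⊥
  /-- independent (`eᵢ ⊓ êᵢ = ⊥`), -/
  indep : ∀ i, e i ⊓ hatE e i = ⊥
  /-- and (condition `1⁰`) `1_{L₀} = 1_L`, i.e. `⨆ᵢ eᵢ = ⊤` (also `0_{L₀} = 0_L = ⊥`). -/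
  sup_eq_top : (univ : Finset (Fin n)).sup e = ⊤
  /-- Condition `2⁰`: the dimension function is constant, with value `m`, on the atoms. -/
  height_atom : ∀ i, Order.height (e i) = (m : ℕ∞)
  /-- Condition `3⁰`. -/
  c3 : ∀ a ∈ G, ∀ i, sc e ((a : L ≃o L) (e i)) i = e i →
      ∃ h ∈ HiSet e G i, ∀ y, y ≤ e i →
        sc e (h ((a : L ≃o L) y)) i = y ∧ sc e ((a : L ≃o L) (h y)) i = y
  /-- Condition `4⁰`. -/
  c4 : ∀ t i : Fin n, ∃ h, h ∈ HiSet e G t ∧ (∀ z ∈ L0bar e, h z = z) ∧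
      ∀ a ∈ G, ∀ r, r ≠ i → ∀ y, y ≤ e i →
        sc e ((a : L ≃o L) (h ((a : L ≃o L).symm y))) r
          = sc e ((a : L ≃o L) (sc e ((a : L ≃o L).symm y) t)) r
  /-- Condition `5⁰`. -/
  c5 : ∀ u ∈ L0bar e, ∀ i, e i ≤ u → ∀ g ∈ G, sc e ((g : L ≃o L) u) i = e i →
      ∃ t ∈ G, sc e ((g : L ≃o L) ((t : L ≃o L) (e i))) i = e i ∧
        (∀ s, s ≠ i → (t : L ≃o L) (e s) = e s) ∧
        ∀ j, sc e ((t : L ≃o L) (e i)) j ≤ sc e u j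
  /-- Condition `6⁰`. -/
  c6 : ∀ f ∈ G, ∀ g ∈ G, ∀ i j : Fin n,
      sc e ((f : L ≃o L) (e i)) j ≤ sc e ((g : L ≃o L) (e i)) j →
      ∀ x ∈ L0' e G, x ≤ e i → sc e ((f : L ≃o L) x) j ≤ sc e ((g : L ≃o L) x) j
  /-- Condition `7⁰`. -/
  c7 : ∀ j : Fin n, ∀ u, u ≤ e j → ∀ i, i ≠ j →
      ∃ (s : ℕ) (y : Fin s → L), (∀ r, y r ≤ e j) ∧
        u = (univ : Finset (Fin s)).sup y ∧ ∀ r, (Hij e G i j (y r)).Nonempty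
  /-- Condition `8⁰`. -/
  c8 : ∀ f ∈ G, ∀ i j : Fin n, i ≠ j →
      ∃ g ∈ Hij e G i j (sc e ((f : L ≃o L) (e i)) j),
        ∀ u, u ≤ e i → sc e (g u) j = sc e ((f : L ≃o L) u) j
  /-- Condition `9⁰`. -/
  c9 : ∀ i j : Fin n, i ≠ j → ∀ x, x ≤ e j → ∀ w : L,
      Order.height w = (m : ℕ∞) →
      sc e w i = e i → sc e w j = x → (∀ k, k ≠ i → k ≠ j → sc e w k = ⊥) →
      (Hij e G i j x).Nonempty → ∃ t ∈ Hij e G i j x, t w = e i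
  /-- Condition `10⁰`. -/
  c10 : ∀ i j : Fin n, i ≠ j → ∀ (s : ℕ) (xs : Fin s → L) (a : Fin s → (L ≃o L)),
      (∀ r, a r ∈ Hij e G i j (xs r)) →
      ∀ y, y ≤ (univ : Finset (Fin s)).sup xs → (Hij e G i j y).Nonempty →
      Hij e G i j y ⊆ ↑(Subgroup.closure (Hset e G ∪ Set.range a))
  /-- Condition `11⁰`. -/
  c11 : ∀ a ∈ G, ∀ t : Fin n, ∀ i j : Fin n, i ≠ j → ∀ h ∈ HiSet e G t,
      (Hij e G i j (sc e ((a : L ≃o L) (h ((a : L ≃o L).symm (e i)))) j) ∩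
        ↑(Subgroup.closure (insert (a : L ≃o L) (Hset e G)))).Nonempty


/-!
Condition `(△)` on `u ≤ eⱼ` is certified by transvections. By `7⁰`, `u` is a join of elements
`y` with `H_{ij}(y) ≠ ∅`, and if `u` satisfies `(△)` then every `a ∈ H_{ij}(y)`, `y ≤ u`, has
`[a xᵢ]ⱼ ≤ xⱼ`; a modular computation in the interval `[⊥, eᵢ ⊔ eⱼ]` shows that such an `a`
fixes `xᵢ ⊔ xⱼ`. Conversely, if `[f eᵢ]ⱼ ≤ u`, then `8⁰` replaces `f` by a transvection
`g ∈ H_{ij}([f eᵢ]ⱼ)` with the same effect on `j`-components, and by `10⁰` `g` lies in the group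
generated by `H` and the certifying transvections. All of these fix `xᵢ ⊔ xⱼ` (`H` fixes `x` and
every `eₖ`), hence so does `g`, and `[f xᵢ]ⱼ = [g xᵢ]ⱼ ≤ [xᵢ ⊔ xⱼ]ⱼ = xⱼ`.
Concatenating certificates for `u₁` and `u₂` certifies `u₁ ⊔ u₂`, and `⊥` is certified by the
empty family, so the solutions of `(△)` form a nonempty sup-closed set; as `L` has no infinite
ascending chains, it contains its supremum.
-/

section Frame

variable {e : Fin n → L}

lemma sc_le (w : L) (k : Fin n) : sc e w k ≤ e k := inf_le_right

lemma sc_mono {a b : L} (h : a ≤ b) (k : Fin n) : sc e a k ≤ sc e b k :=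
  inf_le_inf_right _ (sup_le_sup_right h _)

lemma sc_sup_of_le_hatE (w : L) {y : L} {k : Fin n} (hy : y ≤ hatE e k) :
    sc e (w ⊔ y) k = sc e w k := by
  rw [sc, sc, sup_assoc, sup_eq_right.2 hy]

lemma le_hatE {k i : Fin n} (h : k ≠ i) : e k ≤ hatE e i :=
  le_sup (mem_erase.2 ⟨h, mem_univ _⟩)

lemma sup_hatE (htop : univ.sup e = ⊤) (k : Fin n) : e k ⊔ hatE e k = ⊤ := by
  rw [hatE, ← sup_insert, insert_erase (mem_univ k), htop]

lemma atoms_inf_eq_bot (hind : ∀ k, e k ⊓ hatE e k = ⊥) {i j : Fin n} (hij : i ≠ j) :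
    e i ⊓ e j = ⊥ :=
  le_bot_iff.1 ((inf_le_inf_left _ (le_hatE hij.symm)).trans (hind i).le)

variable [IsModularLattice L]

lemma sup_inf_sup_of_inf_eq_bot {a a' b b' : L} (ha : a' ≤ a) (hb : b' ≤ b) (hab : a ⊓ b = ⊥) :
    (a' ⊔ b) ⊓ (a ⊔ b') = a' ⊔ b' := by
  rw [sup_inf_assoc_of_le _ (ha.trans le_sup_left), sup_comm a, inf_comm b,
    sup_inf_assoc_of_le _ hb, hab, sup_bot_eq]

lemma sc_of_le (hind : ∀ k, e k ⊓ hatE e k = ⊥) {w : L} {k : Fin n} (hw : w ≤ e k) :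
    sc e w k = w := by
  rw [sc, sup_inf_assoc_of_le _ hw, inf_comm, hind, sup_bot_eq]

lemma sc_sup_hatE (htop : univ.sup e = ⊤) (w : L) (k : Fin n) :
    sc e w k ⊔ hatE e k = w ⊔ hatE e k := by
  rw [sc, inf_sup_assoc_of_le _ le_sup_right, sup_hatE htop, inf_top_eq]

lemma le_hatE_of_sc_eq_bot (htop : univ.sup e = ⊤) {w : L} {k : Fin n} (h : sc e w k = ⊥) :
    w ≤ hatE e k := by
  have := sc_sup_hatE htop w k
  rw [h, bot_sup_eq] at this
  exact this ▸ le_sup_left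

lemma le_sup_sdiff_of_sc_eq_bot (hind : ∀ k, e k ⊓ hatE e k = ⊥) (htop : univ.sup e = ⊤)
    {w : L} (T : Finset (Fin n)) (hT : ∀ k ∈ T, sc e w k = ⊥) : w ≤ (univ \ T).sup e := by
  induction T using Finset.induction_on with
  | empty => simp [htop]
  | @insert k T hk ih =>
    have hkT : k ∈ univ \ T := mem_sdiff.2 ⟨mem_univ k, hk⟩
    have hw : w ≤ ((univ \ T).erase k).sup e ⊔ e k := by
      rw [sup_comm, ← sup_insert, insert_erase hkT]
      exact ih fun t ht => hT t (mem_insert_of_mem ht)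
    have hle : ((univ \ T).erase k).sup e ≤ hatE e k :=
      sup_mono (erase_subset_erase k (subset_univ _))
    rw [sdiff_insert]
    calc w ≤ (((univ \ T).erase k).sup e ⊔ e k) ⊓ hatE e k :=
          le_inf hw (le_hatE_of_sc_eq_bot htop (hT k (mem_insert_self k T)))
      _ = ((univ \ T).erase k).sup e := by rw [sup_inf_assoc_of_le _ hle, hind, sup_bot_eq]

lemma le_sup_atoms_of_sc_eq_bot (hind : ∀ k, e k ⊓ hatE e k = ⊥) (htop : univ.sup e = ⊤)
    {w : L} {i j : Fin n} (hv : ∀ k, k ≠ i → k ≠ j → sc e w k = ⊥) : w ≤ e i ⊔ e j := by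
  have := le_sup_sdiff_of_sc_eq_bot hind htop ({i, j}ᶜ) (by simpa [not_or] using hv)
  simpa [← compl_eq_univ_sdiff] using this

lemma sc_sup_eq_sup_of_le (hind : ∀ k, e k ⊓ hatE e k = ⊥) {w : L} {i j : Fin n} (hij : i ≠ j)
    (hw : w ≤ e i ⊔ e j) : sc e w i ⊔ e j = w ⊔ e j := by
  have hji : e j ≤ hatE e i := le_hatE hij.symm
  rw [sc, inf_sup_assoc_of_le _ (hji.trans le_sup_right), sup_inf_assoc_of_le _ hw,
    inf_comm, sup_comm (e i), sup_inf_assoc_of_le _ hji, hind, sup_bot_eq]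

lemma le_sc_sup_sc (hind : ∀ k, e k ⊓ hatE e k = ⊥) {w : L} {i j : Fin n} (hij : i ≠ j)
    (hw : w ≤ e i ⊔ e j) : w ≤ sc e w i ⊔ sc e w j := by
  have hi : w ≤ sc e w i ⊔ e j := by
    rw [sc_sup_eq_sup_of_le hind hij hw]; exact le_sup_left
  have hj : w ≤ e i ⊔ sc e w j := by
    rw [sup_comm, sc_sup_eq_sup_of_le hind hij.symm (sup_comm (e i) _ ▸ hw)]; exact le_sup_left
  calc w ≤ (sc e w i ⊔ e j) ⊓ (e i ⊔ sc e w j) := le_inf hi hj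
    _ = sc e w i ⊔ sc e w j :=
      sup_inf_sup_of_inf_eq_bot (sc_le w i) (sc_le w j) (atoms_inf_eq_bot hind hij)

lemma apply_sup_eq_of_mem_Hij (hind : ∀ k, e k ⊓ hatE e k = ⊥) (htop : univ.sup e = ⊤)
    {G : Subgroup (L ≃o L)} {i j : Fin n} (hij : i ≠ j) {a : L ≃o L} {v : L}
    (ha : a ∈ Hij e G i j v) {xi xj : L} (hxi : xi ≤ e i) (hxj : xj ≤ e j)
    (haxj : sc e (a xi) j ≤ xj) : a (xi ⊔ xj) = xi ⊔ xj := by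
  obtain ⟨-, hfix, hsc_i, hsc_k, -, -⟩ := ha
  have hwi : sc e (a xi) i = xi := hsc_i xi hxi
  have hw : a xi ≤ e i ⊔ e j := le_sup_atoms_of_sc_eq_bot hind htop fun k hki hkj =>
    le_bot_iff.1 ((sc_mono (a.monotone hxi) k).trans_eq (hsc_k k hki hkj))
  rw [map_sup, hfix j hij.symm xj hxj]
  refine eq_of_le_of_inf_le_of_sup_le (z := e j) ?_ ?_ ?_
  · refine sup_le ((le_sc_sup_sc hind hij hw).trans ?_) le_sup_right
    rw [hwi]
    exact sup_le le_sup_left (haxj.trans le_sup_right)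
  · have hxi_inf : xi ⊓ e j = ⊥ :=
      le_bot_iff.1 ((inf_le_inf_right _ hxi).trans (atoms_inf_eq_bot hind hij).le)
    rw [sup_comm, sup_inf_assoc_of_le _ hxj, hxi_inf, sup_bot_eq]
    exact le_inf le_sup_right hxj
  · calc xi ⊔ xj ⊔ e j = a xi ⊔ e j := by
          rw [sup_assoc, sup_eq_right.2 hxj, ← sc_sup_eq_sup_of_le hind hij hw, hwi]
      _ ≤ a xi ⊔ xj ⊔ e j := sup_le_sup_right le_sup_left _

end Frame

lemma apply_eq_of_mem_closure {α : Type*} [Lattice α] {S : Set (α ≃o α)} {z : α}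
    (hS : ∀ s ∈ S, s z = z) {g : α ≃o α} (hg : g ∈ Subgroup.closure S) : g z = z := by
  induction hg using Subgroup.closure_induction with
  | mem s hs => exact hS s hs
  | one => rfl
  | mul p q _ _ hp hq => exact (congrArg p hq).trans hp
  | inv p _ hp => exact (OrderIso.symm_apply_eq p).2 hp.symm

lemma Fin.univ_sup_append {α : Type*} [SemilatticeSup α] [OrderBot α] {s₁ s₂ : ℕ}
    (y₁ : Fin s₁ → α) (y₂ : Fin s₂ → α) :
    univ.sup (Fin.append y₁ y₂) = univ.sup y₁ ⊔ univ.sup y₂ := by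
  refine le_antisymm (Finset.sup_le fun r _ => ?_) (sup_le ?_ ?_)
  · refine Fin.addCases (fun p => ?_) (fun p => ?_) r
    · rw [Fin.append_left]; exact le_sup_of_le_left (le_sup (mem_univ p))
    · rw [Fin.append_right]; exact le_sup_of_le_right (le_sup (mem_univ p))
  · exact Finset.sup_le fun p _ => Fin.append_left y₁ y₂ p ▸ le_sup (mem_univ _)
  · exact Finset.sup_le fun p _ => Fin.append_right y₁ y₂ p ▸ le_sup (mem_univ _)

section Triangle

variable (e : Fin n → L) (G : Subgroup (L ≃o L)) (x : L) (i j : Fin n)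

def TriangleCond (u : L) : Prop :=
  u ≤ e j ∧ ∀ f ∈ G, sc e (f (e i)) j ≤ u → sc e (f (sc e x i)) j ≤ sc e x j

def IsTransvectionCovered (u : L) : Prop :=
  ∃ (s : ℕ) (ys : Fin s → L) (a : Fin s → L ≃o L),
    (∀ r, a r ∈ Hij e G i j (ys r) ∧ sc e (a r (sc e x i)) j ≤ sc e x j) ∧ u ≤ univ.sup ys

variable {e G x i j}

lemma isTransvectionCovered_bot : IsTransvectionCovered e G x i j ⊥ :=
  ⟨0, Fin.elim0, Fin.elim0, fun r => r.elim0, bot_le⟩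

lemma IsTransvectionCovered.sup {u₁ u₂ : L} (h₁ : IsTransvectionCovered e G x i j u₁)
    (h₂ : IsTransvectionCovered e G x i j u₂) : IsTransvectionCovered e G x i j (u₁ ⊔ u₂) := by
  obtain ⟨s₁, y₁, a₁, ha₁, hu₁⟩ := h₁
  obtain ⟨s₂, y₂, a₂, ha₂, hu₂⟩ := h₂
  refine ⟨s₁ + s₂, Fin.append y₁ y₂, Fin.append a₁ a₂, fun r => ?_, ?_⟩
  · refine Fin.addCases (fun p => ?_) (fun p => ?_) r
    · simpa only [Fin.append_left] using ha₁ p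
    · simpa only [Fin.append_right] using ha₂ p
  · rw [Fin.univ_sup_append]
    exact sup_le_sup hu₁ hu₂

lemma sc_apply_of_mem_Hset {h : L ≃o L} (hh : h ∈ Hset e G) (hx : x ∈ L0' e G) (k : Fin n) :
    h (sc e x k) = sc e x k := by
  have hhat : h (hatE e k) = hatE e k := by
    rw [hatE, map_finset_sup]
    exact Finset.sup_congr rfl fun t _ => hh.2 t
  rw [sc, map_inf, map_sup, hx h hh, hhat, hh.2]

lemma TriangleCond.isTransvectionCovered {m : ℕ} (hc : PaperConditions e G m) (hij : i ≠ j)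
    {u : L} (h : TriangleCond e G x i j u) : IsTransvectionCovered e G x i j u := by
  obtain ⟨s, ys, -, rfl, hne⟩ := hc.c7 j u h.1 i hij
  choose a ha using hne
  refine ⟨s, ys, a, fun r => ⟨ha r, h.2 _ (ha r).1 ?_⟩, le_rfl⟩
  rw [(ha r).2.2.2.2.2]
  exact le_sup (mem_univ r)

variable [IsModularLattice L]

lemma IsTransvectionCovered.triangleCond {m : ℕ} (hc : PaperConditions e G m)
    (hx : x ∈ L0' e G) (hij : i ≠ j) {u : L} (hu : u ≤ e j)
    (h : IsTransvectionCovered e G x i j u) : TriangleCond e G x i j u := by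
  obtain ⟨s, ys, a, ha, hsup⟩ := h
  refine ⟨hu, fun f hf hfu => ?_⟩
  obtain ⟨g, hg, hgf⟩ := hc.c8 f hf i j hij
  have hfix : g (sc e x i ⊔ sc e x j) = sc e x i ⊔ sc e x j := by
    refine apply_eq_of_mem_closure ?_
      (hc.c10 i j hij s ys a (fun r => (ha r).1) _ (hfu.trans hsup) ⟨g, hg⟩ hg)
    rintro b (hb | ⟨r, rfl⟩)
    · rw [map_sup, sc_apply_of_mem_Hset hb hx, sc_apply_of_mem_Hset hb hx]
    · exact apply_sup_eq_of_mem_Hij hc.indep hc.sup_eq_top hij (ha r).1 (sc_le x i)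
        (sc_le x j) (ha r).2
  calc sc e (f (sc e x i)) j = sc e (g (sc e x i)) j := (hgf _ (sc_le x i)).symm
    _ ≤ sc e (g (sc e x i ⊔ sc e x j)) j := sc_mono (g.monotone le_sup_left) j
    _ = sc e x j := by
      rw [hfix, sup_comm, sc_sup_of_le_hatE _ ((sc_le x i).trans (le_hatE hij)),
        sc_of_le hc.indep (sc_le x j)]

lemma supClosed_triangleCond {m : ℕ} (hc : PaperConditions e G m) (hx : x ∈ L0' e G)
    (hij : i ≠ j) : SupClosed {u | TriangleCond e G x i j u} := by
  intro u₁ h₁ u₂ h₂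
  exact ((h₁.isTransvectionCovered hc hij).sup (h₂.isTransvectionCovered hc hij)).triangleCond
    hc hx hij (sup_le h₁.1 h₂.1)

end Triangle

theorem triangle_condition_sup_and_max_general {L : Type*} [CompleteLattice L] [IsModularLattice L]
    [WellFoundedGT L] {n : ℕ} (e : Fin n → L)
    (G : Subgroup (L ≃o L)) (m : ℕ)
    (hc : PaperConditions e G m)
    (x : L) (hx : x ∈ L0bar e ∩ L0' e G) (i j : Fin n) (hij : i ≠ j) :
    (∀ u₁ u₂,
        (u₁ ≤ e j ∧ ∀ f ∈ G, sc e ((f : L ≃o L) (e i)) j ≤ u₁ →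
            sc e ((f : L ≃o L) (sc e x i)) j ≤ sc e x j) →
        (u₂ ≤ e j ∧ ∀ f ∈ G, sc e ((f : L ≃o L) (e i)) j ≤ u₂ →
            sc e ((f : L ≃o L) (sc e x i)) j ≤ sc e x j) →
        (u₁ ⊔ u₂ ≤ e j ∧ ∀ f ∈ G, sc e ((f : L ≃o L) (e i)) j ≤ u₁ ⊔ u₂ →
            sc e ((f : L ≃o L) (sc e x i)) j ≤ sc e x j)) ∧
    ∃ τ, IsGreatest {u | u ≤ e j ∧ ∀ f ∈ G, sc e ((f : L ≃o L) (e i)) j ≤ u →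
            sc e ((f : L ≃o L) (sc e x i)) j ≤ sc e x j} τ := by
  have hS : SupClosed {u | TriangleCond e G x i j u} := supClosed_triangleCond hc hx.2 hij
  have hbot : TriangleCond e G x i j ⊥ :=
    isTransvectionCovered_bot.triangleCond hc hx.2 hij bot_le
  refine ⟨fun u₁ u₂ h₁ h₂ => hS h₁ h₂, sSup {u | TriangleCond e G x i j u}, ?_,
    fun u hu => le_sSup hu⟩
  exact CompleteLattice.WellFoundedGT.isSupClosedCompact L inferInstance _ ⟨⊥, hbot⟩ hS

/-- **Lemma 10.1 and its Corollary.** In the setting of the paper with conditions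
`1⁰`–`11⁰`, fix `x ∈ L̄₀ ∩ L₀′` with components `x_k = [x]_k`, and indices `i, j`.
Say `u ≤ eⱼ` satisfies condition `(△)` if for every `f ∈ G`, `[f eᵢ]ⱼ ≤ u` implies
`[f xᵢ]ⱼ ≤ xⱼ`. Then: if `u₁, u₂` both satisfy `(△)`, so does `u₁ ⊔ u₂`; consequently
there exists a maximal element `τ_{ij}(x) ≤ eⱼ` satisfying `(△)`. -/
theorem triangle_condition_sup_and_max {L : Type*} [CompleteLattice L] [IsModularLattice L]
    [WellFoundedLT L] [WellFoundedGT L] {n : ℕ} (e : Fin n → L)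
    (G : Subgroup (L ≃o L)) (m : ℕ)
    (hc : PaperConditions e G m)
    (x : L) (hx : x ∈ L0bar e ∩ L0' e G) (i j : Fin n) (hij : i ≠ j) :
    (∀ u₁ u₂,
        (u₁ ≤ e j ∧ ∀ f ∈ G, sc e ((f : L ≃o L) (e i)) j ≤ u₁ →
            sc e ((f : L ≃o L) (sc e x i)) j ≤ sc e x j) →
        (u₂ ≤ e j ∧ ∀ f ∈ G, sc e ((f : L ≃o L) (e i)) j ≤ u₂ →
            sc e ((f : L ≃o L) (sc e x i)) j ≤ sc e x j) →
        (u₁ ⊔ u₂ ≤ e j ∧ ∀ f ∈ G, sc e ((f : L ≃o L) (e i)) j ≤ u₁ ⊔ u₂ →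
            sc e ((f : L ≃o L) (sc e x i)) j ≤ sc e x j)) ∧
    ∃ τ, IsGreatest {u | u ≤ e j ∧ ∀ f ∈ G, sc e ((f : L ≃o L) (e i)) j ≤ u →
            sc e ((f : L ≃o L) (sc e x i)) j ≤ sc e x j} τ :=
  triangle_condition_sup_and_max_general e G m hc x hx i j hij
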